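/- Let n ≥ 1, let ψ : ℝⁿ → ℝ be continuously differentiable with 0 ≤ ψ(x) ≤ 1 and |∇ψ(x)| ≤ K for all x and some K > 0, let m ≥ 1 be an integer and λ ≥ 1, and set ξ(x) = exp(λ(ψ(x) + 6m)) and φ(x) = ξ(x) − λ·exp(6λ(m+1)). Then there exist constants 0 < c ≤ C, depending only on λ, m and K, such that for all s > 0 and h ∈ (0,1] with s·h ≤ 1, every x ∈ ℝⁿ and every i ∈ {1,…,n}: c·exp(−s·φ(x)) ≤ A_i(exp(−s·φ))(x) ≤ C·exp(−s·φ(x)), where A_i f(x) = (f(x + (h/2)e_i) + f(x − (h/2)e_i))/2. -/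

import Mathlib

/-- Discrete average operator in direction `i` with mesh size `h`. -/
noncomputable def Aop {n : ℕ} (h : ℝ) (i : Fin n) (f : (Fin n → ℝ) → ℝ)
    (x : Fin n → ℝ) : ℝ :=
  (f (x + Pi.single i (h / 2)) + f (x - Pi.single i (h / 2))) / 2

/-- The Carleman weight `ξ(x) = exp(λ(ψ(x) + 6m))`. -/
noncomputable def xiW {n : ℕ} (lam : ℝ) (m : ℕ) (ψ : (Fin n → ℝ) → ℝ)
    (x : Fin n → ℝ) : ℝ :=
  Real.exp (lam * (ψ x + 6 * (m : ℝ)))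

/-- The Carleman weight `φ(x) = ξ(x) − λ·exp(6λ(m+1))`. -/
noncomputable def phiW {n : ℕ} (lam : ℝ) (m : ℕ) (ψ : (Fin n → ℝ) → ℝ)
    (x : Fin n → ℝ) : ℝ :=
  xiW lam m ψ x - lam * Real.exp (6 * lam * ((m : ℝ) + 1))

lemma exp_sub_exp_le' {a b B : ℝ} (ha : a ≤ B) (hb : b ≤ B) :
    |Real.exp a - Real.exp b| ≤ Real.exp B * |a - b| := by
  wlog hab : b ≤ a
  · rw [abs_sub_comm, abs_sub_comm a b]; exact this hb ha (le_of_not_ge hab)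
  rw [abs_of_nonneg (sub_nonneg.2 (Real.exp_le_exp.2 hab)),
    abs_of_nonneg (sub_nonneg.2 hab)]
  have h1 : (b - a) + 1 ≤ Real.exp (b - a) := Real.add_one_le_exp _
  have h2 : Real.exp a - Real.exp b ≤ Real.exp a * (a - b) := by
    have : Real.exp b = Real.exp a * Real.exp (b - a) := by
      rw [← Real.exp_add]; ring_nf
    nlinarith [Real.exp_pos a]
  have h3 : Real.exp a ≤ Real.exp B := Real.exp_le_exp.2 ha
  nlinarith [sub_nonneg.2 hab]

/-- For `ψ` a `C¹` cutoff valued in `[0,1]` with `‖∇ψ‖ ≤ K`,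
`m ≥ 1`, `λ ≥ 1`, and the weights `ξ = exp(λ(ψ + 6m))`, `φ = ξ − λ·exp(6λ(m+1))`,
there are constants `0 < c ≤ C`, depending only on `λ, m, K`, such that for all
`s > 0`, `h ∈ (0,1]` with `s·h ≤ 1`, all `x` and all directions `i`,
`c·exp(−sφ(x)) ≤ A_i(exp(−sφ))(x) ≤ C·exp(−sφ(x))`. -/
theorem stmt15 (m : ℕ) (hm : 1 ≤ m) (lam K : ℝ) (hlam : 1 ≤ lam) (hK : 0 < K) :
    ∃ c C : ℝ, 0 < c ∧ c ≤ C ∧ ∀ (n : ℕ), 1 ≤ n → ∀ ψ : (Fin n → ℝ) → ℝ,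
      ContDiff ℝ 1 ψ → (∀ x, 0 ≤ ψ x ∧ ψ x ≤ 1) → (∀ x, ‖fderiv ℝ ψ x‖ ≤ K) →
      ∀ s h : ℝ, 0 < s → 0 < h → h ≤ 1 → s * h ≤ 1 →
      ∀ (x : Fin n → ℝ) (i : Fin n),
        c * Real.exp (-(s * phiW lam m ψ x))
            ≤ Aop h i (fun y => Real.exp (-(s * phiW lam m ψ y))) x ∧
        Aop h i (fun y => Real.exp (-(s * phiW lam m ψ y))) x
            ≤ C * Real.exp (-(s * phiW lam m ψ x)) := by
  set M : ℝ := lam * K * Real.exp (lam * (6 * m + 1)) with hMdef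
  have hM : 0 ≤ M := by positivity
  refine ⟨Real.exp (-(M/2)), Real.exp (M/2), Real.exp_pos _,
    Real.exp_le_exp.2 (by linarith), ?_⟩
  intro n hn ψ hψ hψ01 hψK s h hs hh hh1 hsh x i
  -- key estimate
  have key : ∀ y : Fin n → ℝ, ‖y - x‖ ≤ h / 2 →
      |s * phiW lam m ψ y - s * phiW lam m ψ x| ≤ M / 2 := by
    intro y hy
    have hdiff : phiW lam m ψ y - phiW lam m ψ x
        = xiW lam m ψ y - xiW lam m ψ x := by
      simp [phiW]
    have hψlip : |ψ y - ψ x| ≤ K * ‖y - x‖ := by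
      have := Convex.norm_image_sub_le_of_norm_fderiv_le
        (f := ψ) (s := (Set.univ : Set (Fin n → ℝ)))
        (fun z _ => (hψ.differentiable one_ne_zero z))
        (fun z _ => hψK z) convex_univ (Set.mem_univ x) (Set.mem_univ y)
      simpa using this
    have hxi : |xiW lam m ψ y - xiW lam m ψ x|
        ≤ Real.exp (lam * (6 * m + 1)) * (lam * (K * ‖y - x‖)) := by
      have ha : lam * (ψ y + 6 * (m : ℝ)) ≤ lam * (6 * m + 1) := by
        have := (hψ01 y).2; nlinarith
      have hb : lam * (ψ x + 6 * (m : ℝ)) ≤ lam * (6 * m + 1) := by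
        have := (hψ01 x).2; nlinarith
      have := exp_sub_exp_le' ha hb
      have habs : |lam * (ψ y + 6 * (m : ℝ)) - lam * (ψ x + 6 * (m : ℝ))|
          ≤ lam * (K * ‖y - x‖) := by
        have : lam * (ψ y + 6 * (m : ℝ)) - lam * (ψ x + 6 * (m : ℝ))
            = lam * (ψ y - ψ x) := by ring
        rw [this, abs_mul, abs_of_nonneg (by linarith : (0:ℝ) ≤ lam)]
        exact mul_le_mul_of_nonneg_left hψlip (by linarith)
      calc |xiW lam m ψ y - xiW lam m ψ x|
          ≤ Real.exp (lam * (6 * m + 1)) * |lam * (ψ y + 6 * (m : ℝ)) -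
              lam * (ψ x + 6 * (m : ℝ))| := this
        _ ≤ _ := mul_le_mul_of_nonneg_left habs (Real.exp_pos _).le
    have : |s * phiW lam m ψ y - s * phiW lam m ψ x|
        = s * |xiW lam m ψ y - xiW lam m ψ x| := by
      rw [← mul_sub, abs_mul, abs_of_pos hs, hdiff]
    rw [this]
    have h1 : s * |xiW lam m ψ y - xiW lam m ψ x|
        ≤ s * (Real.exp (lam * (6 * m + 1)) * (lam * (K * (h / 2)))) := by
      apply mul_le_mul_of_nonneg_left _ hs.le
      refine hxi.trans ?_
      have : (0:ℝ) < Real.exp (lam * (6 * m + 1)) := Real.exp_pos _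
      nlinarith [norm_nonneg (y - x)]
    refine h1.trans ?_
    have : s * (Real.exp (lam * (6 * m + 1)) * (lam * (K * (h / 2))))
        = (s * h) * M / 2 := by rw [hMdef]; ring
    rw [this]
    nlinarith
  have hy1 : ‖(x + Pi.single i (h / 2)) - x‖ ≤ h / 2 := by
    simp only [add_sub_cancel_left, Pi.norm_single, Real.norm_eq_abs,
      abs_div, abs_of_pos hh, abs_two]
    norm_num
  have hy2 : ‖(x - Pi.single i (h / 2)) - x‖ ≤ h / 2 := by
    have : (x - Pi.single i (h / 2)) - x = -(Pi.single i (h / 2)) := by abel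
    rw [this, norm_neg]
    simp only [Pi.norm_single, Real.norm_eq_abs, abs_div, abs_of_pos hh, abs_two]
    norm_num
  have hb : ∀ y : Fin n → ℝ, ‖y - x‖ ≤ h / 2 →
      Real.exp (-(M/2)) * Real.exp (-(s * phiW lam m ψ x))
        ≤ Real.exp (-(s * phiW lam m ψ y)) ∧
      Real.exp (-(s * phiW lam m ψ y))
        ≤ Real.exp (M/2) * Real.exp (-(s * phiW lam m ψ x)) := by
    intro y hy
    have hk := key y hy
    rw [abs_le] at hk
    constructor
    · rw [← Real.exp_add]
      exact Real.exp_le_exp.2 (by linarith [hk.2])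
    · rw [← Real.exp_add]
      exact Real.exp_le_exp.2 (by linarith [hk.1])
  obtain ⟨hl1, hu1⟩ := hb _ hy1
  obtain ⟨hl2, hu2⟩ := hb _ hy2
  constructor
  · unfold Aop; dsimp only; linarith
  · unfold Aop; dsimp only; linarith
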